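/- Let 0 ≤ r ≤ n. If the input sequence {u_k}_{k=0}^{N−r−1} is persistently exciting of order n+1−r, then for every output reachable system (A,B,C,D) (i.e., Γ has full row rank p) whose first r Markov parameters vanish (Γ_i = 0 for i = 0,…,r−1) and every initial state x_0 ∈ ℝ^n, the output sequence {y_k}_{k=0}^{N−1} generated from x_0 under {u_k}_{k=0}^{N−1} is persistently exciting of order 1. -/

import Mathlib

/-!
Let `ξ` annihilate every output `y_k`, `k < N`. Cayley–Hamilton, written with the reversed
coefficients `d_s` of the characteristic polynomial (so `d_0 = 1`), eliminates the state:
`∑_{i ≤ n} d_{n-i} y_{k+i} = M [u_k; …; u_{k+n}]`. The blocks `M_j` with `j < r` vanish, so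
`ξᵀ M` only sees the first `n + 1 - r` inputs of each window, and persistent excitation forces
`ξᵀ M = 0`. As `M_j = Γ_j + ∑_{q<j} d_{j-q} Γ_q` is unitriangular in the Markov parameters, this
gives `ξᵀ Γ = 0`, hence `ξ = 0` by output reachability.
-/

open Matrix Finset

noncomputable def stateSeq {n m : ℕ} (A : Matrix (Fin n) (Fin n) ℝ) (B : Matrix (Fin n) (Fin m) ℝ)
    (x0 : Fin n → ℝ) (u : ℕ → Fin m → ℝ) : ℕ → Fin n → ℝ
  | 0 => x0
  | k + 1 => A.mulVec (stateSeq A B x0 u k) + B.mulVec (u k)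

/-- Output sequence `y_k = C x_k + D u_k` of the LTI system started at `x0` with input `u`. -/
noncomputable def outputSeq {n m p : ℕ} (A : Matrix (Fin n) (Fin n) ℝ) (B : Matrix (Fin n) (Fin m) ℝ)
    (C : Matrix (Fin p) (Fin n) ℝ) (D : Matrix (Fin p) (Fin m) ℝ)
    (x0 : Fin n → ℝ) (u : ℕ → Fin m → ℝ) (k : ℕ) : Fin p → ℝ :=
  C.mulVec (stateSeq A B x0 u k) + D.mulVec (u k)

/-- Markov parameters: `Γ_0 = D`, `Γ_j = C A^(j-1) B` for `j ≥ 1`. -/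
noncomputable def Markov {n m p : ℕ} (A : Matrix (Fin n) (Fin n) ℝ) (B : Matrix (Fin n) (Fin m) ℝ)
    (C : Matrix (Fin p) (Fin n) ℝ) (D : Matrix (Fin p) (Fin m) ℝ) : ℕ → Matrix (Fin p) (Fin m) ℝ
  | 0 => D
  | j + 1 => C * A ^ j * B

/-- The matrix `M = [M_n ⋯ M_1 M_0]` with `M_j = ∑_{q=0}^j d_{j-q} Γ_q`; the block at
block-column `i` (from the left, `i = 0,…,n`) is `M_{n-i}`. -/
noncomputable def Mmat {n m p : ℕ} (A : Matrix (Fin n) (Fin n) ℝ) (B : Matrix (Fin n) (Fin m) ℝ)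
    (C : Matrix (Fin p) (Fin n) ℝ) (D : Matrix (Fin p) (Fin m) ℝ) (d : ℕ → ℝ) :
    Matrix (Fin p) (Fin (n + 1) × Fin m) ℝ :=
  Matrix.of fun i jl =>
    (∑ q ∈ Finset.range ((n - (jl.1 : ℕ)) + 1),
      d ((n - (jl.1 : ℕ)) - q) • Markov A B C D q) i jl.2

/-- The matrix `Γ = [Γ_0 Γ_1 ⋯ Γ_n]`. -/
noncomputable def Gammamat {n m p : ℕ} (A : Matrix (Fin n) (Fin n) ℝ) (B : Matrix (Fin n) (Fin m) ℝ)
    (C : Matrix (Fin p) (Fin n) ℝ) (D : Matrix (Fin p) (Fin m) ℝ) :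
    Matrix (Fin p) (Fin (n + 1) × Fin m) ℝ :=
  Matrix.of fun i jl => Markov A B C D (jl.1 : ℕ) i jl.2
theorem Matrix.rank_eq_card_iff_forall_vecMul_eq_zero {K ι κ : Type*} [Field K] [Fintype ι]
    [Fintype κ] (M : Matrix ι κ K) : M.rank = Fintype.card ι ↔ ∀ ξ : ι → K, ξ ᵥ* M = 0 → ξ = 0 := by
  rw [rank_eq_finrank_span_row, ← Set.finrank, eq_comm,
    ← linearIndependent_iff_card_eq_finrank_span, ← vecMul_injective_iff, ← coe_vecMulLinear,
    injective_iff_map_eq_zero]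
  rfl

theorem eq_zero_of_forall_sum_range_smul_eq_zero {R V : Type*} [Ring R] [AddCommGroup V]
    [Module R V] {d : ℕ → R} (hd : d 0 = 1) {v : ℕ → V} {n : ℕ}
    (h : ∀ j ≤ n, ∑ q ∈ range (j + 1), d (j - q) • v q = 0) : ∀ j ≤ n, v j = 0 := by
  intro j
  induction j using Nat.strong_induction_on with
  | _ j ih =>
    intro hj
    have hprev : ∑ q ∈ range j, d (j - q) • v q = 0 :=
      sum_eq_zero fun q hq => by rw [ih q (mem_range.1 hq) (by grind), smul_zero]
    simpa [sum_range_succ, hprev, hd] using h j hj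

def hankel {R κ : Type*} (u : ℕ → κ → R) (L T : ℕ) : Matrix (Fin L × κ) (Fin T) R :=
  of fun il k => u (k + il.1) il.2

theorem eq_zero_of_rank_hankel_eq_card {K κ : Type*} [Field K] [Fintype κ]
    {u : ℕ → κ → K} {L T n : ℕ} (hPE : (hankel u L T).rank = Fintype.card (Fin L × κ))
    (hL : L ≤ n + 1) {z : Fin (n + 1) × κ → K} (hz : ∀ jl, L ≤ (jl.1 : ℕ) → z jl = 0)
    (h : ∀ k < T, z ⬝ᵥ (fun jl => u (k + jl.1) jl.2) = 0) : z = 0 := by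
  set w : Fin L × κ → K := fun jl => z (Fin.castLE hL jl.1, jl.2)
  have hw : w = 0 := by
    refine (rank_eq_card_iff_forall_vecMul_eq_zero _).1 hPE w (funext fun k => ?_)
    refine (Fintype.sum_of_injective (Prod.map (Fin.castLE hL) id) ?_ _ _ ?_ ?_).trans (h k k.2)
    · exact (Fin.castLE_injective hL).prodMap Function.injective_id
    · rintro ⟨j, l⟩ hjl
      have : L ≤ (j : ℕ) := by
        by_contra! hj
        exact hjl ⟨(⟨j, hj⟩, l), rfl⟩
      simp [hz (j, l) this]
    · intro jl
      rfl
  funext ⟨j, l⟩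
  by_cases hj : (j : ℕ) < L
  · exact congrFun hw (⟨j, hj⟩, l)
  · exact hz _ (not_lt.1 hj)

section LTI

variable {n m p : ℕ} (A : Matrix (Fin n) (Fin n) ℝ) (B : Matrix (Fin n) (Fin m) ℝ)
  (C : Matrix (Fin p) (Fin n) ℝ) (D : Matrix (Fin p) (Fin m) ℝ) (x0 : Fin n → ℝ)
  (u : ℕ → Fin m → ℝ)

theorem stateSeq_add (k i : ℕ) :
    stateSeq A B x0 u (k + i) = A ^ i *ᵥ stateSeq A B x0 u k
      + ∑ j ∈ range i, A ^ (i - 1 - j) *ᵥ B *ᵥ u (k + j) := by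
  induction i with
  | zero => simp
  | succ i ih =>
    rw [← add_assoc, stateSeq, ih, mulVec_add, mulVec_mulVec, ← pow_succ', mulVec_sum,
      sum_range_succ, Nat.add_sub_cancel, Nat.sub_self, pow_zero, one_mulVec, ← add_assoc]
    congr 2
    refine sum_congr rfl fun j hj => ?_
    rw [mulVec_mulVec, ← pow_succ']
    congr 2
    grind

theorem outputSeq_add (k i : ℕ) :
    outputSeq A B C D x0 u (k + i) = (C * A ^ i) *ᵥ stateSeq A B x0 u k
      + ∑ j ∈ range (i + 1), Markov A B C D (i - j) *ᵥ u (k + j) := by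
  rw [outputSeq, stateSeq_add, mulVec_add, mulVec_mulVec, mulVec_sum, sum_range_succ,
    Nat.sub_self, add_assoc]
  congr 2
  refine sum_congr rfl fun j hj => ?_
  rw [show i - j = (i - 1 - j) + 1 by grind, Markov, mulVec_mulVec, mulVec_mulVec,
    Matrix.mul_assoc]

theorem Mmat_mulVec (d : ℕ → ℝ) (v : Fin (n + 1) × Fin m → ℝ) :
    Mmat A B C D d *ᵥ v = ∑ j : Fin (n + 1),
      (∑ q ∈ range (n - j + 1), d (n - j - q) • Markov A B C D q) *ᵥ fun l => v (j, l) := by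
  ext a
  simp [mulVec, dotProduct, Fintype.sum_prod_type, Mmat, Matrix.sum_apply]

theorem sum_smul_outputSeq_eq_Mmat_mulVec (d : ℕ → ℝ)
    (hd : ∑ i ∈ range (n + 1), d (n - i) • A ^ i = 0) (k : ℕ) :
    ∑ i ∈ range (n + 1), d (n - i) • outputSeq A B C D x0 u (k + i)
      = Mmat A B C D d *ᵥ fun jl => u (k + jl.1) jl.2 := by
  have hfree : ∑ i ∈ range (n + 1), d (n - i) • (C * A ^ i) *ᵥ stateSeq A B x0 u k = 0 := by
    simp_rw [← smul_mulVec, ← sum_mulVec, ← Matrix.mul_smul, ← Matrix.mul_sum, hd,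
      Matrix.mul_zero, zero_mulVec]
  calc ∑ i ∈ range (n + 1), d (n - i) • outputSeq A B C D x0 u (k + i)
      = ∑ i ∈ range (n + 1), ∑ j ∈ range (i + 1),
          d (n - i) • Markov A B C D (i - j) *ᵥ u (k + j) := by
        simp_rw [outputSeq_add, smul_add, sum_add_distrib, hfree, zero_add, smul_sum]
    _ = ∑ j ∈ range (n + 1), ∑ i ∈ Ico j (n + 1),
          d (n - i) • Markov A B C D (i - j) *ᵥ u (k + j) := by
        simp_rw [range_eq_Ico]
        exact (sum_Ico_Ico_comm 0 (n + 1) _).symm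
    _ = ∑ j ∈ range (n + 1), (∑ q ∈ range (n - j + 1), d (n - j - q) • Markov A B C D q)
          *ᵥ u (k + j) := by
        refine sum_congr rfl fun j hj => ?_
        rw [sum_Ico_eq_sum_range, sum_mulVec]
        refine sum_congr (by grind) fun q _ => ?_
        rw [smul_mulVec, Nat.add_sub_cancel_left, Nat.sub_sub]
    _ = Mmat A B C D d *ᵥ fun jl => u (k + jl.1) jl.2 := by
        rw [Mmat_mulVec, Fin.sum_univ_eq_sum_range
          (fun j => (∑ q ∈ range (n - j + 1), d (n - j - q) • Markov A B C D q) *ᵥ u (k + j))]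

theorem Mmat_apply_eq_zero {r : ℕ} (hΓ : ∀ i < r, Markov A B C D i = 0) (d : ℕ → ℝ) (a : Fin p)
    (j : Fin (n + 1)) (l : Fin m) (hj : n + 1 - r ≤ j) : Mmat A B C D d a (j, l) = 0 := by
  rw [Mmat, of_apply, sum_eq_zero fun q hq => by rw [hΓ q (by grind), smul_zero]]
  rfl

theorem vecMul_Gammamat_eq_zero {d : ℕ → ℝ} (hd : d 0 = 1) {ξ : Fin p → ℝ}
    (h : ξ ᵥ* Mmat A B C D d = 0) : ξ ᵥ* Gammamat A B C D = 0 := by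
  have hΓ := eq_zero_of_forall_sum_range_smul_eq_zero hd (v := fun q => ξ ᵥ* Markov A B C D q)
    (n := n) fun j hj => funext fun l => by
      simp_rw [← vecMul_smul, ← vecMul_sum]
      rw [← Nat.sub_sub_self hj]
      exact congrFun h (⟨n - j, by omega⟩, l)
  funext ⟨q, l⟩
  exact congrFun (hΓ q q.is_le) l

theorem vecMul_Mmat_eq_zero {r T : ℕ}
    (hPE : (hankel u (n + 1 - r) T).rank = Fintype.card (Fin (n + 1 - r) × Fin m))
    (hΓ : ∀ i < r, Markov A B C D i = 0) {d : ℕ → ℝ}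
    (hd : ∑ i ∈ range (n + 1), d (n - i) • A ^ i = 0) {ξ : Fin p → ℝ}
    (hξ : ∀ k < T + n, ξ ⬝ᵥ outputSeq A B C D x0 u k = 0) : ξ ᵥ* Mmat A B C D d = 0 := by
  refine eq_zero_of_rank_hankel_eq_card hPE (Nat.sub_le _ _) (fun jl hjl => ?_)
    fun k hk => ?_
  · simp [vecMul, dotProduct, Mmat_apply_eq_zero A B C D hΓ d _ jl.1 jl.2 hjl]
  · rw [← dotProduct_mulVec, ← sum_smul_outputSeq_eq_Mmat_mulVec A B C D x0 u d hd,
      dotProduct_sum]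
    exact sum_eq_zero fun i hi => by rw [dotProduct_smul, hξ _ (by grind), smul_zero]

end LTI

theorem stmt_12_general {n m p : ℕ}
    (r : ℕ) (hr : r ≤ n) (N : ℕ) (hN : n < N) (u : ℕ → Fin m → ℝ)
    (hPE : (Matrix.of fun (il : Fin (n + 1 - r) × Fin m) (k : Fin ((N - r) - (n + 1 - r) + 1)) =>
        u ((k : ℕ) + (il.1 : ℕ)) il.2).rank = m * (n + 1 - r)) :
    ∀ (A : Matrix (Fin n) (Fin n) ℝ) (B : Matrix (Fin n) (Fin m) ℝ)
      (C : Matrix (Fin p) (Fin n) ℝ) (D : Matrix (Fin p) (Fin m) ℝ),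
      (Gammamat A B C D).rank = p →
      (∀ i < r, Markov A B C D i = 0) →
      ∀ x0 : Fin n → ℝ,
        (Matrix.of fun (i : Fin p) (k : Fin N) => outputSeq A B C D x0 u (k : ℕ) i).rank = p := by
  intro A B C D hreach hvanish x0
  set d : ℕ → ℝ := fun s => A.charpoly.coeff (n - s)
  have hdeg : A.charpoly.natDegree = n := by simp
  have hd0 : d 0 = 1 := by
    rw [← A.charpoly_monic.leadingCoeff, Polynomial.leadingCoeff, hdeg]
    rfl
  have hCH : ∑ i ∈ range (n + 1), d (n - i) • A ^ i = 0 := by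
    rw [← A.aeval_self_charpoly, Polynomial.aeval_eq_sum_range, hdeg]
    exact sum_congr rfl fun i hi => by dsimp only [d]; rw [Nat.sub_sub_self (by grind)]
  have hH : (hankel u (n + 1 - r) ((N - r) - (n + 1 - r) + 1)).rank
      = Fintype.card (Fin (n + 1 - r) × Fin m) := by
    rw [Fintype.card_prod, Fintype.card_fin, Fintype.card_fin, mul_comm]
    exact hPE
  refine ((rank_eq_card_iff_forall_vecMul_eq_zero _).2 fun ξ hξ => ?_).trans (Fintype.card_fin p)
  have hM := vecMul_Mmat_eq_zero A B C D x0 u hH hvanish hCH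
    fun k hk => congrFun hξ ⟨k, by omega⟩
  exact (rank_eq_card_iff_forall_vecMul_eq_zero _).1 (hreach.trans (Fintype.card_fin p).symm) ξ
    (vecMul_Gammamat_eq_zero A B C D hd0 hM)

/-- if `{u_k}_{k=0}^{N-r-1}` is PE of order `n+1-r`, then for every output
reachable system whose first `r` Markov parameters vanish, and every initial state, the output
`{y_k}_{k=0}^{N-1}` is PE of order 1. -/
theorem stmt_12 {n m p : ℕ} (hn : 0 < n) (hm : 0 < m) (hp : 0 < p)
    (r : ℕ) (hr : r ≤ n) (N : ℕ) (hN : n < N) (u : ℕ → Fin m → ℝ)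
    (hPE : (Matrix.of fun (il : Fin (n + 1 - r) × Fin m) (k : Fin ((N - r) - (n + 1 - r) + 1)) =>
        u ((k : ℕ) + (il.1 : ℕ)) il.2).rank = m * (n + 1 - r)) :
    ∀ (A : Matrix (Fin n) (Fin n) ℝ) (B : Matrix (Fin n) (Fin m) ℝ)
      (C : Matrix (Fin p) (Fin n) ℝ) (D : Matrix (Fin p) (Fin m) ℝ),
      (Gammamat A B C D).rank = p →
      (∀ i < r, Markov A B C D i = 0) →
      ∀ x0 : Fin n → ℝ,
        (Matrix.of fun (i : Fin p) (k : Fin N) => outputSeq A B C D x0 u (k : ℕ) i).rank = p :=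
  stmt_12_general r hr N hN u hPE
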